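/- A k-element stamp chain B is extremal (has maximal range among k-element stamp chains) if and only if B = {1} ∪ (A+1) for some extremal (k−1)-element stamp basis A; moreover then n(B) = n(A) + 2. -/
import Mathlib


/-- `A` generates `c` if `c` is an element or a sum of two (possibly equal) elements. -/
def Generates (A : Finset ℕ) (c : ℕ) : Prop :=
  c ∈ A ∨ ∃ a ∈ A, ∃ b ∈ A, c = a + b

/-- `A` generates every integer in `[1, n]`, i.e. `A` is a stamp basis for `n`. -/
def GeneratesUpTo (A : Finset ℕ) (n : ℕ) : Prop :=
  ∀ c, 1 ≤ c → c ≤ n → Generates A c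

/-- The range of `A` is exactly `n`: `[1,n]` generated but not `n+1`. -/
def RangeIs (A : Finset ℕ) (n : ℕ) : Prop :=
  GeneratesUpTo A n ∧ ¬ Generates A (n + 1)

/-- The range of `A`: the largest `n` such that `A` generates all of `[1,n]`. -/
noncomputable def rangeOf (A : Finset ℕ) : ℕ :=
  sSup {n | GeneratesUpTo A n}

/-- `A` is admissible: it generates every integer in `[1, max A]`. -/
def Admissible (A : Finset ℕ) : Prop :=
  ∀ a ∈ A, ∀ c, 1 ≤ c → c ≤ a → Generates A c

/-- `A` is an addition chain: `1 ∈ A` and every larger element is the sum of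
two (possibly equal) smaller elements of `A`. -/
def AdditionChain (A : Finset ℕ) : Prop :=
  1 ∈ A ∧ ∀ a ∈ A, 1 < a → ∃ b ∈ A, ∃ c ∈ A, b < a ∧ c < a ∧ a = b + c

/-! ### Auxiliary lemmas -/

lemma SC.gen_le_sum {A : Finset ℕ} {c : ℕ} (h : Generates A c) : c ≤ 2 * ∑ a ∈ A, a := by
  rcases h with h | ⟨a, ha, b, hb, rfl⟩
  · have := Finset.single_le_sum (f := id) (fun i _ => Nat.zero_le i) h
    simp only [id] at this; omega
  · have h1 := Finset.single_le_sum (f := id) (fun i _ => Nat.zero_le i) ha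
    have h2 := Finset.single_le_sum (f := id) (fun i _ => Nat.zero_le i) hb
    simp only [id] at h1 h2; omega

lemma SC.bdd (A : Finset ℕ) : BddAbove {n | GeneratesUpTo A n} := by
  refine ⟨2 * ∑ a ∈ A, a, fun n hn => ?_⟩
  rcases Nat.eq_zero_or_pos n with rfl | hn0
  · exact Nat.zero_le _
  · exact SC.gen_le_sum (hn n hn0 le_rfl)

lemma SC.genUpTo_zero (A : Finset ℕ) : GeneratesUpTo A 0 := by
  intro c h1 h0; omega

lemma SC.genUpTo_range (A : Finset ℕ) : GeneratesUpTo A (rangeOf A) :=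
  Nat.sSup_mem ⟨0, by exact SC.genUpTo_zero A⟩ (SC.bdd A)

lemma SC.le_range {A : Finset ℕ} {n : ℕ} (h : GeneratesUpTo A n) : n ≤ rangeOf A :=
  le_csSup (SC.bdd A) h

lemma SC.not_gen_succ (A : Finset ℕ) : ¬ Generates A (rangeOf A + 1) := by
  intro h
  have hg : GeneratesUpTo A (rangeOf A + 1) := by
    intro c h1 h2
    rcases Nat.lt_or_ge c (rangeOf A + 1) with hc | hc
    · exact SC.genUpTo_range A c h1 (by omega)
    · have : c = rangeOf A + 1 := by omega
      exact this ▸ h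
  have := SC.le_range hg; omega

/-- shift -/
def SC.shift (A : Finset ℕ) : Finset ℕ := insert 1 (A.image (· + 1))

lemma SC.genUpTo_shift (A : Finset ℕ) (n : ℕ) (h : GeneratesUpTo A n) :
    GeneratesUpTo (SC.shift A) (n + 2) := by
  intro c h1 h2
  have h1' : (1 : ℕ) ∈ SC.shift A := Finset.mem_insert_self _ _
  rcases Nat.lt_or_ge c 3 with hc | hc
  · interval_cases c
    · exact Or.inl h1'
    · exact Or.inr ⟨1, h1', 1, h1', rfl⟩
  · rcases h (c - 2) (by omega) (by omega) with hm | ⟨x, hx, y, hy, hxy⟩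
    · refine Or.inr ⟨1, h1', (c - 2) + 1,
        Finset.mem_insert_of_mem (Finset.mem_image.2 ⟨_, hm, rfl⟩), by omega⟩
    · refine Or.inr ⟨x + 1, Finset.mem_insert_of_mem (Finset.mem_image.2 ⟨_, hx, rfl⟩),
        y + 1, Finset.mem_insert_of_mem (Finset.mem_image.2 ⟨_, hy, rfl⟩), by omega⟩

/-- unshift -/
def SC.unshift (C : Finset ℕ) : Finset ℕ := (C.erase 1).image (· - 1)

lemma SC.genUpTo_unshift (C : Finset ℕ) (hpos : ∀ b ∈ C, 0 < b)
    (hchain : AdditionChain C) (n : ℕ) (h : GeneratesUpTo C n) :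
    GeneratesUpTo (SC.unshift C) (n - 2) := by
  intro c h1 h2
  have key : ∀ u ∈ C, ∀ v ∈ C, u + v = c + 2 → Generates (SC.unshift C) c := by
    intro u hu v hv huv
    have hu1 := hpos u hu
    have hv1 := hpos v hv
    rcases Nat.eq_or_lt_of_le hu1 with h1u | h1u
    · exact Or.inl (Finset.mem_image.2 ⟨v, Finset.mem_erase.2 ⟨by omega, hv⟩, by omega⟩)
    · rcases Nat.eq_or_lt_of_le hv1 with h1v | h1v
      · exact Or.inl (Finset.mem_image.2 ⟨u, Finset.mem_erase.2 ⟨by omega, hu⟩, by omega⟩)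
      · exact Or.inr ⟨u - 1, Finset.mem_image.2 ⟨u, Finset.mem_erase.2 ⟨by omega, hu⟩, rfl⟩,
          v - 1, Finset.mem_image.2 ⟨v, Finset.mem_erase.2 ⟨by omega, hv⟩, rfl⟩, by omega⟩
  rcases h (c + 2) (by omega) (by omega) with hm | ⟨u, hu, v, hv, huv⟩
  · obtain ⟨u, hu, v, hv, _, _, heq⟩ := hchain.2 (c + 2) hm (by omega)
    exact key u hu v hv heq.symm
  · exact key u hu v hv huv.symm

lemma SC.range_shift_ge (A : Finset ℕ) : rangeOf A + 2 ≤ rangeOf (SC.shift A) :=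
  SC.le_range (SC.genUpTo_shift A _ (SC.genUpTo_range A))

lemma SC.range_unshift_ge (C : Finset ℕ) (hpos : ∀ b ∈ C, 0 < b)
    (hchain : AdditionChain C) : rangeOf C ≤ rangeOf (SC.unshift C) + 2 := by
  have := SC.le_range (SC.genUpTo_unshift C hpos hchain _ (SC.genUpTo_range C))
  omega

lemma SC.shift_pos (A : Finset ℕ) : ∀ b ∈ SC.shift A, 0 < b := by
  intro b hb
  rcases Finset.mem_insert.1 hb with rfl | hb'
  · omega
  · obtain ⟨a, _, rfl⟩ := Finset.mem_image.1 hb'; omega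

lemma SC.unshift_pos (C : Finset ℕ) (hpos : ∀ b ∈ C, 0 < b) :
    ∀ a ∈ SC.unshift C, 0 < a := by
  intro a ha
  obtain ⟨b, hb, rfl⟩ := Finset.mem_image.1 ha
  have h1 := (Finset.mem_erase.1 hb).1
  have h2 := hpos b (Finset.mem_of_mem_erase hb)
  omega

lemma SC.card_shift (A : Finset ℕ) (hpos : ∀ a ∈ A, 0 < a) :
    (SC.shift A).card = A.card + 1 := by
  rw [SC.shift, Finset.card_insert_of_notMem, Finset.card_image_of_injective _ (add_left_injective 1)]
  intro h
  obtain ⟨a, ha, h1⟩ := Finset.mem_image.1 h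
  have := hpos a ha; omega

lemma SC.card_unshift (C : Finset ℕ) (hpos : ∀ b ∈ C, 0 < b) (h1 : (1:ℕ) ∈ C) :
    (SC.unshift C).card = C.card - 1 := by
  rw [SC.unshift, Finset.card_image_of_injOn, Finset.card_erase_of_mem h1]
  intro x hx y hy hxy
  have hx1 := hpos x (Finset.mem_of_mem_erase hx)
  have hy1 := hpos y (Finset.mem_of_mem_erase hy)
  simp only at hxy
  omega

lemma SC.shift_unshift (C : Finset ℕ) (hpos : ∀ b ∈ C, 0 < b) (h1 : (1:ℕ) ∈ C) :
    SC.shift (SC.unshift C) = C := by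
  ext x
  simp only [SC.shift, SC.unshift, Finset.mem_insert, Finset.mem_image, Finset.mem_erase]
  constructor
  · rintro (rfl | ⟨y, ⟨a, ⟨ha1, ha⟩, rfl⟩, rfl⟩)
    · exact h1
    · have := hpos a ha
      have : a - 1 + 1 = a := by omega
      rwa [this]
  · intro hx
    by_cases hx1 : x = 1
    · exact Or.inl hx1
    · have := hpos x hx
      exact Or.inr ⟨x - 1, ⟨x, ⟨hx1, hx⟩, rfl⟩, by omega⟩

lemma SC.rangeOf_card_bound (C : Finset ℕ) : rangeOf C ≤ C.card + C.card * C.card := by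
  have h := SC.genUpTo_range C
  have hsub : Finset.Icc 1 (rangeOf C) ⊆ C ∪ (C ×ˢ C).image (fun p => p.1 + p.2) := by
    intro c hc
    rw [Finset.mem_Icc] at hc
    rcases h c hc.1 hc.2 with hm | ⟨a, ha, b, hb, rfl⟩
    · exact Finset.mem_union_left _ hm
    · exact Finset.mem_union_right _
        (Finset.mem_image.2 ⟨(a, b), Finset.mem_product.2 ⟨ha, hb⟩, rfl⟩)
  have h1 := Finset.card_le_card hsub
  rw [Nat.card_Icc] at h1
  have h2 := Finset.card_union_le C ((C ×ˢ C).image fun p => p.1 + p.2)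
  have h3 := Finset.card_image_le (s := C ×ˢ C) (f := fun p => p.1 + p.2)
  rw [Finset.card_product] at h3
  omega

lemma SC.exists_extremal (m : ℕ) :
    ∃ A : Finset ℕ, (∀ a ∈ A, 0 < a) ∧ A.card = m ∧
      ∀ C : Finset ℕ, (∀ c ∈ C, 0 < c) → C.card = m → rangeOf C ≤ rangeOf A := by
  set S : Set ℕ := {n | ∃ C : Finset ℕ, (∀ c ∈ C, 0 < c) ∧ C.card = m ∧ rangeOf C = n} with hS
  have hne : S.Nonempty := by
    refine ⟨rangeOf (Finset.Icc 1 m), Finset.Icc 1 m, ?_, ?_, rfl⟩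
    · intro c hc; rw [Finset.mem_Icc] at hc; omega
    · rw [Nat.card_Icc]; omega
  have hbdd : BddAbove S := by
    refine ⟨m + m * m, ?_⟩
    rintro n ⟨C, _, hc, rfl⟩
    have := SC.rangeOf_card_bound C
    rw [hc] at this
    exact this
  obtain ⟨A, hA1, hA2, hA3⟩ := Nat.sSup_mem hne hbdd
  exact ⟨A, hA1, hA2, fun C hC1 hC2 => hA3 ▸ le_csSup hbdd ⟨C, hC1, hC2, rfl⟩⟩

lemma SC.extremal_mem_le (A : Finset ℕ) (hpos : ∀ a ∈ A, 0 < a)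
    (hext : ∀ C : Finset ℕ, (∀ c ∈ C, 0 < c) → C.card = A.card → rangeOf C ≤ rangeOf A) :
    ∀ a ∈ A, a ≤ rangeOf A := by
  intro a ha
  by_contra hgt
  push_neg at hgt
  have hne : a ≠ rangeOf A + 1 := by
    intro h
    exact SC.not_gen_succ A (Or.inl (h ▸ ha))
  have hn1 : (rangeOf A + 1) ∉ A := fun h => SC.not_gen_succ A (Or.inl h)
  set A' := insert (rangeOf A + 1) (A.erase a) with hA'
  have hcard : A'.card = A.card := by
    rw [hA', Finset.card_insert_of_notMem (fun h => hn1 (Finset.mem_of_mem_erase h)),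
        Finset.card_erase_of_mem ha]
    have : 0 < A.card := Finset.card_pos.2 ⟨a, ha⟩
    omega
  have hpos' : ∀ c ∈ A', 0 < c := by
    intro c hc
    rcases Finset.mem_insert.1 hc with rfl | hc
    · omega
    · exact hpos c (Finset.mem_of_mem_erase hc)
  have hgen : GeneratesUpTo A' (rangeOf A + 1) := by
    intro c h1 h2
    rcases Nat.lt_or_ge c (rangeOf A + 1) with hc | hc
    · rcases SC.genUpTo_range A c h1 (by omega) with hm | ⟨x, hx, y, hy, rfl⟩
      · exact Or.inl (Finset.mem_insert_of_mem (Finset.mem_erase.2 ⟨by omega, hm⟩))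
      · have hx1 := hpos x hx
        have hy1 := hpos y hy
        exact Or.inr ⟨x, Finset.mem_insert_of_mem (Finset.mem_erase.2 ⟨by omega, hx⟩),
          y, Finset.mem_insert_of_mem (Finset.mem_erase.2 ⟨by omega, hy⟩), rfl⟩
    · have hc' : c = rangeOf A + 1 := by omega
      exact Or.inl (hc' ▸ Finset.mem_insert_self _ _)
  have hle := SC.le_range hgen
  have h2 := hext A' hpos' hcard
  omega

lemma SC.shift_chain (A : Finset ℕ) (hpos : ∀ a ∈ A, 0 < a)
    (hle : ∀ a ∈ A, a ≤ rangeOf A) : AdditionChain (SC.shift A) := by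
  refine ⟨Finset.mem_insert_self _ _, ?_⟩
  intro b hb hb1
  have h1 : (1 : ℕ) ∈ SC.shift A := Finset.mem_insert_self _ _
  rcases Finset.mem_insert.1 hb with rfl | hb'
  · exact absurd hb1 (lt_irrefl 1)
  obtain ⟨a, ha, rfl⟩ := Finset.mem_image.1 hb'
  rcases Nat.eq_or_lt_of_le (hpos a ha) with h | h
  · exact ⟨1, h1, 1, h1, by omega, by omega, by omega⟩
  · rcases SC.genUpTo_range A (a - 1) (by omega) (by have := hle a ha; omega) with
      hm | ⟨x, hx, y, hy, hxy⟩
    · refine ⟨1, h1, (a - 1) + 1,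
        Finset.mem_insert_of_mem (Finset.mem_image.2 ⟨_, hm, rfl⟩), by omega, by omega, by omega⟩
    · have hx1 := hpos x hx
      have hy1 := hpos y hy
      exact ⟨x + 1, Finset.mem_insert_of_mem (Finset.mem_image.2 ⟨_, hx, rfl⟩),
        y + 1, Finset.mem_insert_of_mem (Finset.mem_image.2 ⟨_, hy, rfl⟩),
        by omega, by omega, by omega⟩

/-- A k-element stamp chain B is extremal iff B = {1} ∪ (A+1) for some extremal
(k-1)-element stamp basis A; moreover then n(B) = n(A) + 2. -/
theorem extremal_chain_iff_shift_of_extremal_basis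
    (k : ℕ) (hk : 1 < k) (B : Finset ℕ)
    (hpos : ∀ b ∈ B, 0 < b) (hcard : B.card = k) (hchain : AdditionChain B) :
    (∀ C : Finset ℕ, (∀ c ∈ C, 0 < c) → AdditionChain C → C.card = k →
        rangeOf C ≤ rangeOf B)
    ↔ ∃ A : Finset ℕ, (∀ a ∈ A, 0 < a) ∧ A.card = k - 1 ∧
        (∀ C : Finset ℕ, (∀ c ∈ C, 0 < c) → C.card = k - 1 →
          rangeOf C ≤ rangeOf A) ∧
        B = insert 1 (A.image (· + 1)) ∧
        rangeOf B = rangeOf A + 2 := by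
  obtain ⟨A₀, hA₀pos, hA₀card, hA₀ext⟩ := SC.exists_extremal (k - 1)
  have hA₀le : ∀ a ∈ A₀, a ≤ rangeOf A₀ :=
    SC.extremal_mem_le A₀ hA₀pos (fun C h1 h2 => hA₀ext C h1 (h2.trans hA₀card))
  have hchain₀ : AdditionChain (SC.shift A₀) := SC.shift_chain A₀ hA₀pos hA₀le
  have hpos₀ : ∀ b ∈ SC.shift A₀, 0 < b := SC.shift_pos A₀
  have hcard₀ : (SC.shift A₀).card = k := by
    rw [SC.card_shift A₀ hA₀pos, hA₀card]; omega
  constructor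
  · intro hBext
    have h1B : (1:ℕ) ∈ B := hchain.1
    set A := SC.unshift B with hAdef
    have hApos : ∀ a ∈ A, 0 < a := SC.unshift_pos B hpos
    have hAcard : A.card = k - 1 := by rw [hAdef, SC.card_unshift B hpos h1B, hcard]
    have hBA : rangeOf B ≤ rangeOf A + 2 := SC.range_unshift_ge B hpos hchain
    have hB0 : rangeOf A₀ + 2 ≤ rangeOf B :=
      le_trans (SC.range_shift_ge A₀) (hBext (SC.shift A₀) hpos₀ hchain₀ hcard₀)
    have hAle : rangeOf A ≤ rangeOf A₀ := hA₀ext A hApos hAcard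
    have hAeq : rangeOf A = rangeOf A₀ := le_antisymm hAle (by omega)
    refine ⟨A, hApos, hAcard, ?_, ?_, by omega⟩
    · intro C hC1 hC2
      rw [hAeq]
      exact hA₀ext C hC1 hC2
    · show B = SC.shift A
      exact (SC.shift_unshift B hpos h1B).symm
  · rintro ⟨A, hApos, hAcard, hAext, hBeq, hBr⟩
    intro C hCpos hCchain hCcard
    have h1C : (1:ℕ) ∈ C := hCchain.1
    have hC2 : rangeOf C ≤ rangeOf (SC.unshift C) + 2 :=
      SC.range_unshift_ge C hCpos hCchain
    have hCA := hAext (SC.unshift C) (SC.unshift_pos C hCpos)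
      (by rw [SC.unshift, ← SC.unshift, SC.card_unshift C hCpos h1C, hCcard])
    omega
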